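/- Let y : ℝ × ℝ → ℝ be smooth (C^∞), and let u = sin ∘ y and v = cos ∘ y, with normalized Taylor coefficients Y, U, V at the origin. Then for all natural numbers k ≥ 1 and h ≥ 0: k · U(k,h) = Σ_{m=0}^{k−1} Σ_{n=0}^{h} (k−m) · V(m,n) · Y(k−m, h−n), and k · V(k,h) = − Σ_{m=0}^{k−1} Σ_{n=0}^{h} (k−m) · U(m,n) · Y(k−m, h−n). -/

import Mathlib

/-- Partial derivative with respect to the first coordinate (time). -/
noncomputable def pt (f : ℝ × ℝ → ℝ) : ℝ × ℝ → ℝ :=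
  fun p => deriv (fun s => f (s, p.2)) p.1

/-- Partial derivative with respect to the second coordinate (space). -/
noncomputable def px (f : ℝ × ℝ → ℝ) : ℝ × ℝ → ℝ :=
  fun p => deriv (fun s => f (p.1, s)) p.2

/-- Normalized Taylor coefficient at the origin:
`tcoeff w k h = (1/(k!·h!)) ∂ₜᵏ ∂ₓʰ w (0,0)`. -/
noncomputable def tcoeff (w : ℝ × ℝ → ℝ) (k h : ℕ) : ℝ :=
  (1 / ((Nat.factorial k : ℝ) * (Nat.factorial h : ℝ))) * (pt^[k] (px^[h] w)) (0, 0)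

abbrev Sm (f : ℝ × ℝ → ℝ) : Prop := ContDiff ℝ (⊤ : ℕ∞) f

lemma lineT_hasFDeriv (b a : ℝ) : HasFDerivAt (fun s : ℝ => (s, b)) (ContinuousLinearMap.inl ℝ ℝ ℝ) a := by
  have h1 : HasFDerivAt (fun s : ℝ => ((s : ℝ), (0:ℝ))) (ContinuousLinearMap.inl ℝ ℝ ℝ) a :=
    (ContinuousLinearMap.inl ℝ ℝ ℝ).hasFDerivAt
  have := h1.add_const ((0 : ℝ), b)
  simpa using this

lemma lineX_hasFDeriv (b a : ℝ) : HasFDerivAt (fun s : ℝ => (b, s)) (ContinuousLinearMap.inr ℝ ℝ ℝ) a := by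
  have h1 : HasFDerivAt (fun s : ℝ => ((0:ℝ), (s : ℝ))) (ContinuousLinearMap.inr ℝ ℝ ℝ) a :=
    (ContinuousLinearMap.inr ℝ ℝ ℝ).hasFDerivAt
  have := h1.add_const ((b : ℝ), 0)
  simpa [Prod.mk_add_mk] using this

lemma hasDerivAt_slice_t (f : ℝ × ℝ → ℝ) (hf : Sm f) (a b : ℝ) :
    HasDerivAt (fun s => f (s, b)) (fderiv ℝ f (a, b) (1, 0)) a := by
  have hfd : HasFDerivAt f (fderiv ℝ f (a, b)) (a, b) :=
    (hf.differentiable (by simp) (a, b)).hasFDerivAt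
  have := (hfd.comp a (lineT_hasFDeriv b a)).hasDerivAt
  exact this

lemma hasDerivAt_slice_x (f : ℝ × ℝ → ℝ) (hf : Sm f) (a b : ℝ) :
    HasDerivAt (fun s => f (a, s)) (fderiv ℝ f (a, b) (0, 1)) b := by
  have hfd : HasFDerivAt f (fderiv ℝ f (a, b)) (a, b) :=
    (hf.differentiable (by simp) (a, b)).hasFDerivAt
  have := (hfd.comp b (lineX_hasFDeriv a b)).hasDerivAt
  exact this

lemma pt_eq (f : ℝ × ℝ → ℝ) (hf : Sm f) : pt f = fun p => fderiv ℝ f p (1, 0) := by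
  funext p
  exact (hasDerivAt_slice_t f hf p.1 p.2).deriv

lemma px_eq (f : ℝ × ℝ → ℝ) (hf : Sm f) : px f = fun p => fderiv ℝ f p (0, 1) := by
  funext p
  exact (hasDerivAt_slice_x f hf p.1 p.2).deriv

lemma Sm.pt {f : ℝ × ℝ → ℝ} (hf : Sm f) : Sm (pt f) := by
  rw [pt_eq f hf]; exact (hf.fderiv_right (by simp)).clm_apply contDiff_const

lemma Sm.px {f : ℝ × ℝ → ℝ} (hf : Sm f) : Sm (px f) := by
  rw [px_eq f hf]; exact (hf.fderiv_right (by simp)).clm_apply contDiff_const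

lemma pt_px_comm (f : ℝ × ℝ → ℝ) (hf : Sm f) : pt (px f) = px (pt f) := by
  rw [pt_eq _ hf.px, px_eq _ hf.pt, px_eq _ hf, pt_eq _ hf]
  funext p
  have hd1 : ∀ q : ℝ × ℝ, HasFDerivAt f (fderiv ℝ f q) q :=
    fun q => (hf.differentiable (by simp) q).hasFDerivAt
  have hd2 : HasFDerivAt (fderiv ℝ f) (fderiv ℝ (fderiv ℝ f) p) p :=
    (((hf.fderiv_right (m := 1) (by exact WithTop.coe_le_coe.mpr le_top)).differentiable one_ne_zero) p).hasFDerivAt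
  have hsymm := second_derivative_symmetric hd1 hd2 (1, 0) (0, 1)
  have e1 : (fun q => fderiv ℝ f q (0, 1)) =
      fun q => ((ContinuousLinearMap.apply ℝ ℝ (0,1) : ((ℝ×ℝ) →L[ℝ] ℝ) →L[ℝ] ℝ)) (fderiv ℝ f q) := rfl
  have e2 : (fun q => fderiv ℝ f q (1, 0)) =
      fun q => ((ContinuousLinearMap.apply ℝ ℝ (1,0) : ((ℝ×ℝ) →L[ℝ] ℝ) →L[ℝ] ℝ)) (fderiv ℝ f q) := rfl
  rw [e1, e2]
  have h3 : HasFDerivAt (fun q => ((ContinuousLinearMap.apply ℝ ℝ) ((0:ℝ),(1:ℝ))) (fderiv ℝ f q))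
      (((ContinuousLinearMap.apply ℝ ℝ) ((0:ℝ),(1:ℝ))).comp (fderiv ℝ (fderiv ℝ f) p)) p :=
    ((ContinuousLinearMap.apply ℝ ℝ ((0:ℝ),(1:ℝ))).hasFDerivAt.comp p hd2)
  have h4 : HasFDerivAt (fun q => ((ContinuousLinearMap.apply ℝ ℝ) ((1:ℝ),(0:ℝ))) (fderiv ℝ f q))
      (((ContinuousLinearMap.apply ℝ ℝ) ((1:ℝ),(0:ℝ))).comp (fderiv ℝ (fderiv ℝ f) p)) p :=
    ((ContinuousLinearMap.apply ℝ ℝ ((1:ℝ),(0:ℝ))).hasFDerivAt.comp p hd2)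
  rw [h3.fderiv, h4.fderiv]
  simpa using hsymm

lemma diffAt_slice_t (f : ℝ × ℝ → ℝ) (hf : Sm f) (a b : ℝ) :
    DifferentiableAt ℝ (fun s => f (s, b)) a :=
  (hasDerivAt_slice_t f hf a b).differentiableAt

lemma diffAt_slice_x (f : ℝ × ℝ → ℝ) (hf : Sm f) (a b : ℝ) :
    DifferentiableAt ℝ (fun s => f (a, s)) b :=
  (hasDerivAt_slice_x f hf a b).differentiableAt

lemma pt_mul (f g : ℝ × ℝ → ℝ) (hf : Sm f) (hg : Sm g) :
    pt (fun p => f p * g p) = fun p => pt f p * g p + f p * pt g p := by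
  funext p
  show deriv (fun s => f (s, p.2) * g (s, p.2)) p.1 = _
  rw [deriv_fun_mul (diffAt_slice_t f hf p.1 p.2) (diffAt_slice_t g hg p.1 p.2)]
  rfl

lemma px_mul (f g : ℝ × ℝ → ℝ) (hf : Sm f) (hg : Sm g) :
    px (fun p => f p * g p) = fun p => px f p * g p + f p * px g p := by
  funext p
  show deriv (fun s => f (p.1, s) * g (p.1, s)) p.2 = _
  rw [deriv_fun_mul (diffAt_slice_x f hf p.1 p.2) (diffAt_slice_x g hg p.1 p.2)]
  rfl

lemma pt_sum (N : ℕ) (F : ℕ → ℝ × ℝ → ℝ) (hF : ∀ i ∈ Finset.range N, Sm (F i)) :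
    pt (fun p => ∑ i ∈ Finset.range N, F i p) = fun p => ∑ i ∈ Finset.range N, pt (F i) p := by
  funext p
  show deriv (fun s => ∑ i ∈ Finset.range N, F i (s, p.2)) p.1 = _
  rw [deriv_fun_sum (fun i hi => diffAt_slice_t (F i) (hF i hi) p.1 p.2)]
  rfl

lemma px_sum (N : ℕ) (F : ℕ → ℝ × ℝ → ℝ) (hF : ∀ i ∈ Finset.range N, Sm (F i)) :
    px (fun p => ∑ i ∈ Finset.range N, F i p) = fun p => ∑ i ∈ Finset.range N, px (F i) p := by
  funext p
  show deriv (fun s => ∑ i ∈ Finset.range N, F i (p.1, s)) p.2 = _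
  rw [deriv_fun_sum (fun i hi => diffAt_slice_x (F i) (hF i hi) p.1 p.2)]
  rfl

lemma pt_const_mul (c : ℝ) (f : ℝ × ℝ → ℝ) (hf : Sm f) :
    pt (fun p => c * f p) = fun p => c * pt f p := by
  funext p
  show deriv (fun s => c * f (s, p.2)) p.1 = _
  rw [deriv_const_mul c (diffAt_slice_t f hf p.1 p.2)]
  rfl

lemma px_const_mul (c : ℝ) (f : ℝ × ℝ → ℝ) (hf : Sm f) :
    px (fun p => c * f p) = fun p => c * px f p := by
  funext p
  show deriv (fun s => c * f (p.1, s)) p.2 = _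
  rw [deriv_const_mul c (diffAt_slice_x f hf p.1 p.2)]
  rfl

lemma pt_neg (f : ℝ × ℝ → ℝ) : pt (fun p => -f p) = fun p => -pt f p := by
  funext p
  show deriv (fun s => -f (s, p.2)) p.1 = _
  rw [deriv.fun_neg]
  rfl

lemma px_neg (f : ℝ × ℝ → ℝ) : px (fun p => -f p) = fun p => -px f p := by
  funext p
  show deriv (fun s => -f (p.1, s)) p.2 = _
  rw [deriv.fun_neg]
  rfl

lemma smooth_px_iter {f : ℝ × ℝ → ℝ} (hf : Sm f) (n : ℕ) : Sm (px^[n] f) := by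
  induction n with
  | zero => simpa using hf
  | succ n ih => rw [Function.iterate_succ_apply']; exact Sm.px ih

lemma pascal_recomb (a b : ℕ → ℝ) (n : ℕ) :
    ∑ i ∈ Finset.range (n+1), (n.choose i : ℝ) * (a (i+1) * b (n-i) + a i * b (n-i+1))
      = ∑ i ∈ Finset.range (n+2), (((n+1).choose i : ℝ)) * (a i * b (n+1-i)) := by
  have hRHS : ∑ i ∈ Finset.range (n+2), (((n+1).choose i : ℝ)) * (a i * b (n+1-i))
      = (∑ i ∈ Finset.range (n+1), (((n+1).choose (i+1) : ℝ)) * (a (i+1) * b (n-i)))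
        + a 0 * b (n+1) := by
    rw [Finset.sum_range_succ' (fun i => (((n+1).choose i : ℝ)) * (a i * b (n+1-i))) (n+1)]
    simp [Nat.succ_sub_succ]
  have hsecond : ∑ i ∈ Finset.range (n+1), ((n.choose (i+1) : ℝ)) * (a (i+1) * b (n-i))
      = (∑ i ∈ Finset.range (n+1), ((n.choose i : ℝ)) * (a i * b (n+1-i))) - a 0 * b (n+1) := by
    have h2 : ∑ i ∈ Finset.range (n+2), ((n.choose i : ℝ)) * (a i * b (n+1-i))
        = (∑ i ∈ Finset.range (n+1), ((n.choose (i+1) : ℝ)) * (a (i+1) * b (n-i)))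
          + a 0 * b (n+1) := by
      rw [Finset.sum_range_succ' (fun i => ((n.choose i : ℝ)) * (a i * b (n+1-i))) (n+1)]
      simp [Nat.succ_sub_succ]
    have h3 : ∑ i ∈ Finset.range (n+2), ((n.choose i : ℝ)) * (a i * b (n+1-i))
        = ∑ i ∈ Finset.range (n+1), ((n.choose i : ℝ)) * (a i * b (n+1-i)) := by
      rw [Finset.sum_range_succ]
      simp [Nat.choose_succ_self]
    linarith [h2, h3]
  rw [hRHS]
  have hch : ∀ i, (((n+1).choose (i+1) : ℝ)) = (n.choose i : ℝ) + (n.choose (i+1) : ℝ) := by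
    intro i; rw [Nat.choose_succ_succ]; push_cast; ring
  have : ∑ i ∈ Finset.range (n+1), (((n+1).choose (i+1) : ℝ)) * (a (i+1) * b (n-i))
      = (∑ i ∈ Finset.range (n+1), ((n.choose i : ℝ)) * (a (i+1) * b (n-i)))
        + ∑ i ∈ Finset.range (n+1), ((n.choose (i+1) : ℝ)) * (a (i+1) * b (n-i)) := by
    rw [← Finset.sum_add_distrib]
    exact Finset.sum_congr rfl (fun i _ => by rw [hch i]; ring
    )
  rw [this, hsecond]
  have hcongr : ∑ i ∈ Finset.range (n+1), ((n.choose i : ℝ)) * (a i * b (n-i+1))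
      = ∑ i ∈ Finset.range (n+1), ((n.choose i : ℝ)) * (a i * b (n+1-i)) := by
    refine Finset.sum_congr rfl (fun i hi => ?_)
    have : n - i + 1 = n + 1 - i := by
      have := Finset.mem_range.mp hi; omega
    rw [this]
  simp only [mul_add, Finset.sum_add_distrib]
  rw [hcongr]
  ring

section Generic

variable (d : (ℝ × ℝ → ℝ) → (ℝ × ℝ → ℝ))
variable (hdS : ∀ f, Sm f → Sm (d f))
variable (hdmul : ∀ f g, Sm f → Sm g → d (fun p => f p * g p) = fun p => d f p * g p + f p * d g p)
variable (hdsum : ∀ (N : ℕ) (F : ℕ → ℝ × ℝ → ℝ), (∀ i ∈ Finset.range N, Sm (F i)) →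
    d (fun p => ∑ i ∈ Finset.range N, F i p) = fun p => ∑ i ∈ Finset.range N, d (F i) p)
variable (hdconst : ∀ (c : ℝ) (f : ℝ × ℝ → ℝ), Sm f → d (fun p => c * f p) = fun p => c * d f p)

include hdS in
lemma smooth_d_iter {f : ℝ × ℝ → ℝ} (hf : Sm f) (n : ℕ) : Sm (d^[n] f) := by
  induction n with
  | zero => simpa using hf
  | succ n ih => rw [Function.iterate_succ_apply']; exact hdS _ ih

include hdS hdmul hdsum hdconst in
lemma leibniz_gen (n : ℕ) (f g : ℝ × ℝ → ℝ) (hf : Sm f) (hg : Sm g) :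
    d^[n] (fun p => f p * g p)
      = fun p => ∑ i ∈ Finset.range (n+1), (n.choose i : ℝ) * (d^[i] f p * d^[n-i] g p) := by
  induction n with
  | zero => funext p; simp
  | succ n ih =>
    rw [Function.iterate_succ_apply', ih]
    set F : ℕ → ℝ × ℝ → ℝ := fun i => fun p => (n.choose i : ℝ) * (d^[i] f p * d^[n-i] g p) with hF
    have hFS : ∀ i ∈ Finset.range (n+1), Sm (F i) := by
      intro i _
      exact contDiff_const.mul ((smooth_d_iter d hdS hf i).mul (smooth_d_iter d hdS hg (n-i)))
    rw [hdsum (n+1) F hFS]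
    funext p
    have hterm : ∀ i ∈ Finset.range (n+1), d (F i) p
        = (n.choose i : ℝ) * (d^[i+1] f p * d^[n-i] g p + d^[i] f p * d^[n-i+1] g p) := by
      intro i _
      have h1 : d (F i) = fun p => (n.choose i : ℝ) *
          d (fun p => d^[i] f p * d^[n-i] g p) p := by
        rw [hF]
        exact hdconst _ _ ((smooth_d_iter d hdS hf i).mul (smooth_d_iter d hdS hg (n-i)))
      have h2 : d (fun p => d^[i] f p * d^[n-i] g p)
          = fun p => d (d^[i] f) p * d^[n-i] g p + d^[i] f p * d (d^[n-i] g) p :=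
        hdmul _ _ (smooth_d_iter d hdS hf i) (smooth_d_iter d hdS hg (n-i))
      rw [h1]
      simp only [h2]
      rw [← Function.iterate_succ_apply' d i f, ← Function.iterate_succ_apply' d (n-i) g]
    rw [Finset.sum_congr rfl hterm]
    exact pascal_recomb (fun i => d^[i] f p) (fun j => d^[j] g p) n

include hdS hdsum in
lemma iter_sum_gen (a N : ℕ) (F : ℕ → ℝ × ℝ → ℝ) (hF : ∀ i ∈ Finset.range N, Sm (F i)) :
    d^[a] (fun p => ∑ i ∈ Finset.range N, F i p)
      = fun p => ∑ i ∈ Finset.range N, d^[a] (F i) p := by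
  induction a with
  | zero => simp
  | succ a ih =>
    rw [Function.iterate_succ_apply', ih, hdsum N _ (fun i hi => smooth_d_iter d hdS (hF i hi) a)]
    funext p
    exact Finset.sum_congr rfl (fun i _ => by rw [← Function.iterate_succ_apply' d a (F i)])

include hdS hdconst in
lemma iter_const_gen (a : ℕ) (c : ℝ) (f : ℝ × ℝ → ℝ) (hf : Sm f) :
    d^[a] (fun p => c * f p) = fun p => c * d^[a] f p := by
  induction a with
  | zero => simp
  | succ a ih =>
    rw [Function.iterate_succ_apply', ih, hdconst c _ (smooth_d_iter d hdS hf a)]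
    funext p
    rw [← Function.iterate_succ_apply' d a f]

end Generic

lemma pt_sm : ∀ f, Sm f → Sm (pt f) := fun _ hf => Sm.pt hf
lemma px_sm : ∀ f, Sm f → Sm (px f) := fun _ hf => Sm.px hf

lemma leibniz2 (f g : ℝ × ℝ → ℝ) (hf : Sm f) (hg : Sm g) (a b : ℕ) :
    pt^[a] (px^[b] (fun p => f p * g p))
      = fun p => ∑ m ∈ Finset.range (a+1), ∑ n ∈ Finset.range (b+1),
          (a.choose m : ℝ) * (b.choose n : ℝ) *
            (pt^[m] (px^[n] f) p * pt^[a-m] (px^[b-n] g) p) := by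
  have h1 : px^[b] (fun p => f p * g p)
      = fun p => ∑ n ∈ Finset.range (b+1), (b.choose n : ℝ) * (px^[n] f p * px^[b-n] g p) :=
    leibniz_gen px px_sm px_mul px_sum px_const_mul b f g hf hg
  rw [h1]
  set F : ℕ → ℝ × ℝ → ℝ := fun n => fun p => (b.choose n : ℝ) * (px^[n] f p * px^[b-n] g p) with hFdef
  have hFS : ∀ n ∈ Finset.range (b+1), Sm (F n) := fun n _ =>
    contDiff_const.mul ((smooth_px_iter hf n).mul (smooth_px_iter hg (b-n)))
  rw [iter_sum_gen pt pt_sm pt_sum a (b+1) F hFS]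
  funext p
  rw [Finset.sum_comm]
  refine Finset.sum_congr rfl (fun n hn => ?_)
  have hc : pt^[a] (F n)
      = fun p => (b.choose n : ℝ) * pt^[a] (fun p => px^[n] f p * px^[b-n] g p) p :=
    iter_const_gen pt pt_sm pt_const_mul a (b.choose n : ℝ) (fun p => px^[n] f p * px^[b-n] g p)
      ((smooth_px_iter hf n).mul (smooth_px_iter hg (b-n)))
  have hl : pt^[a] (fun p => px^[n] f p * px^[b-n] g p)
      = fun p => ∑ m ∈ Finset.range (a+1), (a.choose m : ℝ) *
          (pt^[m] (px^[n] f) p * pt^[a-m] (px^[b-n] g) p) :=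
    leibniz_gen pt pt_sm pt_mul pt_sum pt_const_mul a _ _ (smooth_px_iter hf n) (smooth_px_iter hg (b-n))
  rw [hc]
  simp only [hl]
  rw [Finset.mul_sum]
  exact Finset.sum_congr rfl (fun m _ => by ring)

lemma pt_px_iter_comm (f : ℝ × ℝ → ℝ) (hf : Sm f) (n : ℕ) :
    pt (px^[n] f) = px^[n] (pt f) := by
  induction n generalizing f hf with
  | zero => simp
  | succ n ih =>
    rw [Function.iterate_succ_apply, ih (px f) (Sm.px hf), pt_px_comm f hf,
      ← Function.iterate_succ_apply]

lemma D_eq_tcoeff (w : ℝ × ℝ → ℝ) (k h : ℕ) :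
    (pt^[k] (px^[h] w)) (0, 0) = ((k.factorial : ℝ) * (h.factorial : ℝ)) * tcoeff w k h := by
  unfold tcoeff
  have hk : (k.factorial : ℝ) ≠ 0 := Nat.cast_ne_zero.mpr (Nat.factorial_ne_zero k)
  have hh : (h.factorial : ℝ) ≠ 0 := Nat.cast_ne_zero.mpr (Nat.factorial_ne_zero h)
  field_simp

lemma tcoeff_neg (w : ℝ × ℝ → ℝ) (k h : ℕ) :
    tcoeff (fun p => -w p) k h = -tcoeff w k h := by
  have hx : ∀ n (v : ℝ × ℝ → ℝ), px^[n] (fun p => -v p) = fun p => -px^[n] v p := by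
    intro n v
    induction n generalizing v with
    | zero => simp
    | succ n ih =>
      rw [Function.iterate_succ_apply, px_neg, ih (px v), ← Function.iterate_succ_apply]
  have ht : ∀ n (v : ℝ × ℝ → ℝ), pt^[n] (fun p => -v p) = fun p => -pt^[n] v p := by
    intro n v
    induction n generalizing v with
    | zero => simp
    | succ n ih =>
      rw [Function.iterate_succ_apply, pt_neg, ih (pt v), ← Function.iterate_succ_apply]
  unfold tcoeff
  rw [hx h w, ht k]
  ring

lemma coeff_key (k h m n : ℕ) (hk : 1 ≤ k) (hm : m ≤ k - 1) (hn : n ≤ h) :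
    (k-1).choose m * h.choose n *
      (m.factorial * n.factorial * ((k-m).factorial * (h-n).factorial)) * k
    = (k - m) * (k.factorial * h.factorial) := by
  obtain ⟨a, ha⟩ : ∃ a, k - 1 - m = a := ⟨k - 1 - m, rfl⟩
  have h1 : k - m = a + 1 := by omega
  have c1 : (k-1).choose m * m.factorial * a.factorial = (k-1).factorial := by
    rw [← ha]; exact Nat.choose_mul_factorial_mul_factorial hm
  have c2 : h.choose n * n.factorial * (h-n).factorial = h.factorial :=
    Nat.choose_mul_factorial_mul_factorial hn
  have c3 : k * (k-1).factorial = k.factorial := Nat.mul_factorial_pred (by omega)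
  calc (k-1).choose m * h.choose n *
      (m.factorial * n.factorial * ((k-m).factorial * (h-n).factorial)) * k
      = ((k-1).choose m * m.factorial * a.factorial) *
        (h.choose n * n.factorial * (h-n).factorial) * ((a+1) * k) := by
        rw [h1, Nat.factorial_succ]; ring
    _ = (k-1).factorial * h.factorial * ((a+1) * k) := by rw [c1, c2]
    _ = (a+1) * ((k * (k-1).factorial) * h.factorial) := by ring
    _ = (k - m) * (k.factorial * h.factorial) := by rw [c3, h1]

lemma core (y w F : ℝ × ℝ → ℝ) (hy : Sm y) (hw : Sm w) (hF : Sm F)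
    (hder : pt w = fun p => F p * pt y p) (k h : ℕ) (hk : 1 ≤ k) :
    (k : ℝ) * tcoeff w k h
      = ∑ m ∈ Finset.range k, ∑ n ∈ Finset.range (h + 1),
          ((k - m : ℕ) : ℝ) * tcoeff F m n * tcoeff y (k - m) (h - n) := by
  obtain ⟨k', rfl⟩ : ∃ k', k = k' + 1 := ⟨k - 1, by omega⟩
  clear hk
  have hfun : pt^[k'+1] (px^[h] w)
      = fun p => ∑ m ∈ Finset.range (k'+1), ∑ n ∈ Finset.range (h+1),
          (k'.choose m : ℝ) * (h.choose n : ℝ) *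
            (pt^[m] (px^[n] F) p * pt^[k'-m] (px^[h-n] (pt y)) p) := by
    rw [Function.iterate_succ_apply, pt_px_iter_comm w hw h, hder,
      leibniz2 F (pt y) hF (Sm.pt hy) k' h]
  have hD := congrFun hfun (0, 0)
  have hterm : ∀ m ∈ Finset.range (k'+1), ∀ n ∈ Finset.range (h+1),
      (k'.choose m : ℝ) * (h.choose n : ℝ) *
        (pt^[m] (px^[n] F) (0,0) * pt^[k'-m] (px^[h-n] (pt y)) (0,0))
      = (k'.choose m : ℝ) * (h.choose n : ℝ) *
        ((((m.factorial : ℝ) * (n.factorial : ℝ)) * tcoeff F m n) *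
         ((((k'+1-m).factorial : ℝ) * ((h-n).factorial : ℝ)) * tcoeff y (k'+1-m) (h-n))) := by
    intro m hm n hn
    have hcomm : pt^[k'-m] (px^[h-n] (pt y)) = pt^[k'+1-m] (px^[h-n] y) := by
      rw [← pt_px_iter_comm y hy (h-n), ← Function.iterate_succ_apply]
      congr 1
      have := Finset.mem_range.mp hm
      omega
    rw [hcomm, D_eq_tcoeff F m n, D_eq_tcoeff y (k'+1-m) (h-n)]
  have expand : tcoeff w (k'+1) h
      = (1 / ((((k'+1).factorial : ℝ)) * (h.factorial : ℝ))) *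
        ∑ m ∈ Finset.range (k'+1), ∑ n ∈ Finset.range (h+1),
          (k'.choose m : ℝ) * (h.choose n : ℝ) *
            ((((m.factorial : ℝ) * (n.factorial : ℝ)) * tcoeff F m n) *
             ((((k'+1-m).factorial : ℝ) * ((h-n).factorial : ℝ)) * tcoeff y (k'+1-m) (h-n))) := by
    have hrfl : tcoeff w (k'+1) h
        = (1 / ((((k'+1).factorial : ℝ)) * (h.factorial : ℝ))) * (pt^[k'+1] (px^[h] w)) (0,0) := rfl
    rw [hrfl, hD]
    rw [Finset.sum_congr rfl (fun m hm => Finset.sum_congr rfl (hterm m hm))]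
  rw [expand, Finset.mul_sum, Finset.mul_sum]
  refine Finset.sum_congr rfl (fun m hm => ?_)
  rw [Finset.mul_sum, Finset.mul_sum]
  refine Finset.sum_congr rfl (fun n hn => ?_)
  have hm' : m ≤ k' := by have := Finset.mem_range.mp hm; omega
  have hn' : n ≤ h := by have := Finset.mem_range.mp hn; omega
  have key := coeff_key (k'+1) h m n (by omega) (by omega) hn'
  simp only [Nat.add_sub_cancel] at key
  have keyR : ((k'.choose m : ℝ)) * (h.choose n : ℝ) *
      ((m.factorial : ℝ) * (n.factorial : ℝ) *
        (((k'+1-m).factorial : ℝ) * ((h-n).factorial : ℝ))) * ((k' : ℝ)+1)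
      = ((k'+1-m : ℕ) : ℝ) * (((k'+1).factorial : ℝ) * (h.factorial : ℝ)) := by
    exact_mod_cast congrArg (Nat.cast : ℕ → ℝ) key
  have hfac1 : (((k'+1).factorial : ℝ)) ≠ 0 := Nat.cast_ne_zero.mpr (Nat.factorial_ne_zero _)
  have hfac2 : ((h.factorial : ℝ)) ≠ 0 := Nat.cast_ne_zero.mpr (Nat.factorial_ne_zero _)
  field_simp
  push_cast
  push_cast at keyR
  linear_combination (tcoeff F m n * tcoeff y (k'+1-m) (h-n)) * keyR
/-- Coupled DTM recurrences for `u = sin ∘ y` and `v = cos ∘ y`: for `k ≥ 1`,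
`k·U(k,h) = Σ (k−m)·V(m,n)·Y(k−m,h−n)` and
`k·V(k,h) = −Σ (k−m)·U(m,n)·Y(k−m,h−n)`. -/
theorem dtm_sin_cos_recurrence
    (y : ℝ × ℝ → ℝ) (hy : ContDiff ℝ (⊤ : ℕ∞) y)
    (Y U V : ℕ → ℕ → ℝ)
    (hY : ∀ k h, Y k h = tcoeff y k h)
    (hU : ∀ k h, U k h = tcoeff (fun p => Real.sin (y p)) k h)
    (hV : ∀ k h, V k h = tcoeff (fun p => Real.cos (y p)) k h) :
    ∀ (k h : ℕ), 1 ≤ k →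
      (k : ℝ) * U k h =
        (∑ m ∈ Finset.range k, ∑ n ∈ Finset.range (h + 1),
          ((k - m : ℕ) : ℝ) * V m n * Y (k - m) (h - n)) ∧
      (k : ℝ) * V k h =
        -(∑ m ∈ Finset.range k, ∑ n ∈ Finset.range (h + 1),
          ((k - m : ℕ) : ℝ) * U m n * Y (k - m) (h - n)) := by
  have hu : Sm (fun p => Real.sin (y p)) := Real.contDiff_sin.comp hy
  have hv : Sm (fun p => Real.cos (y p)) := Real.contDiff_cos.comp hy
  have hnsu : Sm (fun p => -Real.sin (y p)) := hu.neg
  have hptu : pt (fun p => Real.sin (y p)) = fun p => Real.cos (y p) * pt y p := by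
    funext p
    have h1 := (hasDerivAt_slice_t y hy p.1 p.2).sin
    have h2 : pt (fun p => Real.sin (y p)) p = deriv (fun s => Real.sin (y (s, p.2))) p.1 := rfl
    rw [h2, h1.deriv, pt_eq y hy]
  have hptv : pt (fun p => Real.cos (y p)) = fun p => (-Real.sin (y p)) * pt y p := by
    funext p
    have h1 := (hasDerivAt_slice_t y hy p.1 p.2).cos
    have h2 : pt (fun p => Real.cos (y p)) p = deriv (fun s => Real.cos (y (s, p.2))) p.1 := rfl
    rw [h2, h1.deriv, pt_eq y hy]
  intro k h hk
  constructor
  · rw [hU]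
    rw [core y (fun p => Real.sin (y p)) (fun p => Real.cos (y p)) hy hu hv hptu k h hk]
    exact Finset.sum_congr rfl (fun m _ => Finset.sum_congr rfl (fun n _ => by
      rw [hV, hY]))
  · rw [hV]
    rw [core y (fun p => Real.cos (y p)) (fun p => -Real.sin (y p)) hy hv hnsu hptv k h hk]
    rw [← Finset.sum_neg_distrib]
    refine Finset.sum_congr rfl (fun m _ => ?_)
    rw [← Finset.sum_neg_distrib]
    refine Finset.sum_congr rfl (fun n _ => ?_)
    have hneg : tcoeff (fun p => -Real.sin (y p)) m n
        = -tcoeff (fun p => Real.sin (y p)) m n := tcoeff_neg _ m n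
    rw [hneg, hU, hY]
    ring
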